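/- arXiv:1903.08987 — 5 statements merged into one kernel-verified Lean document; each statement's English description precedes it below -/
import Mathlib

section
/- For the Gaussian kernel k_σ on ℝ^d with σ > 0 and probability measures P, Q on ℝ^d with characteristic functions φ_P, φ_Q, the squared MMD satisfies γ²_{k_σ}(P,Q) = (σ/√(2π))^d · ∫_{ℝ^d} |φ_P(w) − φ_Q(w)|² · exp(−σ²·wᵀw/2) dw. -/
open MeasureTheory Real

/-- The Gaussian kernel on `ℝ^d` with bandwidth `σ`. -/
noncomputable def gaussKer (d : ℕ) (σ : ℝ) (x y : Fin d → ℝ) : ℝ :=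
  Real.exp (-(∑ i, (x i - y i) ^ 2) / (2 * σ ^ 2))

/-- The squared maximum mean discrepancy between `P` and `Q` for the kernel `k`. -/
noncomputable def gammaSq (d : ℕ) (k : (Fin d → ℝ) → (Fin d → ℝ) → ℝ)
    (P Q : Measure (Fin d → ℝ)) : ℝ :=
  (∫ x, ∫ y, k x y ∂P ∂P) + (∫ x, ∫ y, k x y ∂Q ∂Q) - 2 * ∫ x, ∫ y, k x y ∂P ∂Q

/-- The characteristic function of a measure `P` on `ℝ^d`. -/
noncomputable def charFn (d : ℕ) (P : Measure (Fin d → ℝ)) (w : Fin d → ℝ) : ℂ :=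
  ∫ x, Complex.exp (Complex.I * ((∑ i, w i * x i : ℝ) : ℂ)) ∂P

/-! The Gaussian kernel is, up to the constant `c = (√(2π)/σ)^d`, the Fourier transform of the
Gaussian weight `g(w) = exp(-σ²‖w‖²/2)`: `c · k(x,y) = ∫ e^{i wᵀx} · conj(e^{i wᵀy}) · g(w) dw`.
Since the integrand is bounded by the integrable `g`, Fubini turns every double integral
`∫∫ k dν dμ` into `c⁻¹ ∫ φ_μ · conj φ_ν · g`, and expanding `|φ_P - φ_Q|²` gives the identity. -/

open scoped ComplexConjugate

namespace GaussianMMD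

noncomputable def expInner (d : ℕ) (w x : Fin d → ℝ) : ℂ :=
  Complex.exp (Complex.I * ((∑ i, w i * x i : ℝ) : ℂ))

noncomputable def gaussWeight (d : ℕ) (σ : ℝ) (w : Fin d → ℝ) : ℝ :=
  Real.exp (-σ ^ 2 * (∑ i, w i ^ 2) / 2)

lemma norm_expInner (d : ℕ) (w x : Fin d → ℝ) : ‖expInner d w x‖ = 1 := by
  simp [expInner, Complex.norm_exp]

lemma continuous_expInner (d : ℕ) :
    Continuous (fun p : (Fin d → ℝ) × (Fin d → ℝ) => expInner d p.1 p.2) := by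
  unfold expInner
  fun_prop

lemma gaussKer_comm (d : ℕ) (σ : ℝ) (x y : Fin d → ℝ) : gaussKer d σ x y = gaussKer d σ y x := by
  simp only [gaussKer, ← neg_sub (x _) (y _), neg_sq]

lemma integrable_gaussKer (d : ℕ) (σ : ℝ) (μ ν : Measure (Fin d → ℝ))
    [IsFiniteMeasure μ] [IsFiniteMeasure ν] :
    Integrable (Function.uncurry (gaussKer d σ)) (μ.prod ν) := by
  refine Integrable.of_bound (by unfold Function.uncurry gaussKer; fun_prop) 1
    (Filter.Eventually.of_forall fun p => ?_)
  rw [Function.uncurry_apply_pair, gaussKer, Real.norm_of_nonneg (Real.exp_nonneg _),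
    Real.exp_le_one_iff]
  exact div_nonpos_of_nonpos_of_nonneg (neg_nonpos.2 (by positivity)) (by positivity)

lemma integrable_gaussWeight (d : ℕ) {σ : ℝ} (hσ : 0 < σ) : Integrable (gaussWeight d σ) := by
  have h : gaussWeight d σ = fun w => ∏ i, Real.exp (-(σ ^ 2 / 2) * w i ^ 2) := by
    ext w
    simp only [gaussWeight, ← Real.exp_sum, Finset.mul_sum, Finset.sum_div]
    ring_nf
  rw [h]
  exact Integrable.fintype_prod (f := fun _ v => Real.exp (-(σ ^ 2 / 2) * v ^ 2))
    fun _ => integrable_exp_neg_mul_sq (by positivity)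

lemma cpow_half_pi_div_sq_div_two {σ : ℝ} (hσ : 0 < σ) :
    ((π : ℂ) / ((σ ^ 2 / 2 : ℝ) : ℂ)) ^ (1 / 2 : ℂ) = ((√(2 * π) / σ : ℝ) : ℂ) := by
  rw [← Complex.ofReal_div, show (1 / 2 : ℂ) = ((1 / 2 : ℝ) : ℂ) by norm_num,
    ← Complex.ofReal_cpow (by positivity), ← Real.sqrt_eq_rpow, div_div_eq_mul_div,
    mul_comm, Real.sqrt_div (by positivity), Real.sqrt_sq hσ.le]

lemma integral_expInner_mul_conj_mul_gaussWeight (d : ℕ) {σ : ℝ} (hσ : 0 < σ)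
    (x y : Fin d → ℝ) :
    ∫ w, expInner d w x * conj (expInner d w y) * gaussWeight d σ w =
      (((√(2 * π) / σ) ^ d * gaussKer d σ x y : ℝ) : ℂ) := by
  have hb : ∀ _ : Fin d, 0 < ((σ ^ 2 / 2 : ℝ) : ℂ).re := fun _ => by
    rw [Complex.ofReal_re]; positivity
  have hform : ∀ w, expInner d w x * conj (expInner d w y) * gaussWeight d σ w =
      Complex.exp (-∑ i, ((σ ^ 2 / 2 : ℝ) : ℂ) * (w i : ℂ) ^ 2 +
        ∑ i, (Complex.I * ((x i - y i : ℝ) : ℂ)) * w i) := by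
    intro w
    simp only [expInner, gaussWeight, ← Complex.exp_conj, map_mul, Complex.conj_I,
      Complex.conj_ofReal, Complex.ofReal_exp, ← Complex.exp_add]
    congr 1
    push_cast
    simp only [Finset.mul_sum, Finset.sum_div, ← Finset.sum_neg_distrib, ← Finset.sum_add_distrib]
    exact Finset.sum_congr rfl fun i _ => by ring
  simp_rw [hform, GaussianFourier.integral_cexp_neg_sum_mul_add hb,
    cpow_half_pi_div_sq_div_two hσ, Finset.prod_mul_distrib, Finset.prod_const,
    Finset.card_univ, Fintype.card_fin,
    ← Complex.exp_sum, gaussKer, Complex.ofReal_mul, Complex.ofReal_pow, Complex.ofReal_exp]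
  congr 2
  push_cast
  simp only [Finset.sum_div, ← Finset.sum_neg_distrib]
  refine Finset.sum_congr rfl fun i _ => ?_
  field_simp
  ring_nf
  simp only [Complex.I_sq]
  ring

section Pairing

variable (d : ℕ) {σ : ℝ} (μ ν : Measure (Fin d → ℝ))
  [IsFiniteMeasure μ] [IsFiniteMeasure ν]

lemma integrable_expInner_mul_conj_mul_gaussWeight (hσ : 0 < σ) :
    Integrable (fun p : ((Fin d → ℝ) × (Fin d → ℝ)) × (Fin d → ℝ) =>
      expInner d p.2 p.1.1 * conj (expInner d p.2 p.1.2) * gaussWeight d σ p.2)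
      ((μ.prod ν).prod volume) := by
  refine ((integrable_gaussWeight d hσ).comp_snd (μ.prod ν)).mono' ?_ ?_
  · have := continuous_expInner d
    unfold gaussWeight
    fun_prop
  · refine Filter.Eventually.of_forall fun p => ?_
    simp only [norm_mul, RCLike.norm_conj, norm_expInner, one_mul, Complex.norm_real,
      Real.norm_eq_abs]
    exact (abs_of_nonneg (Real.exp_nonneg _)).le

lemma charFn_mul_conj_eq_integral (w : Fin d → ℝ) :
    charFn d μ w * conj (charFn d ν w) =
      ∫ z, expInner d w z.1 * conj (expInner d w z.2) ∂(μ.prod ν) := by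
  rw [integral_prod_mul (expInner d w) (fun y => conj (expInner d w y)), integral_conj]
  rfl

lemma integrable_charFn_mul_conj_mul_gaussWeight (hσ : 0 < σ) :
    Integrable (fun w => charFn d μ w * conj (charFn d ν w) * gaussWeight d σ w) := by
  simp_rw [charFn_mul_conj_eq_integral, ← integral_mul_const]
  exact (integrable_expInner_mul_conj_mul_gaussWeight d μ ν hσ).integral_prod_right

lemma integral_charFn_mul_conj_mul_gaussWeight (hσ : 0 < σ) :
    ∫ w, charFn d μ w * conj (charFn d ν w) * gaussWeight d σ w =
      (((√(2 * π) / σ) ^ d * ∫ x, ∫ y, gaussKer d σ x y ∂ν ∂μ : ℝ) : ℂ) := by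
  simp_rw [charFn_mul_conj_eq_integral, ← integral_mul_const]
  rw [← integral_integral_swap (integrable_expInner_mul_conj_mul_gaussWeight d μ ν hσ)]
  simp_rw [integral_expInner_mul_conj_mul_gaussWeight d hσ]
  rw [integral_complex_ofReal, integral_const_mul,
    integral_prod (fun z => gaussKer d σ z.1 z.2) (integrable_gaussKer d σ μ ν)]

end Pairing

lemma integral_integral_gaussKer_comm (d : ℕ) (σ : ℝ) (μ ν : Measure (Fin d → ℝ))
    [IsFiniteMeasure μ] [IsFiniteMeasure ν] :
    ∫ x, ∫ y, gaussKer d σ x y ∂ν ∂μ = ∫ x, ∫ y, gaussKer d σ x y ∂μ ∂ν := by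
  rw [integral_integral_swap (integrable_gaussKer d σ μ ν)]
  simp_rw [gaussKer_comm d σ _]

lemma integral_norm_charFn_sub_sq_mul_gaussWeight (d : ℕ) {σ : ℝ} (hσ : 0 < σ)
    (μ ν : Measure (Fin d → ℝ)) [IsFiniteMeasure μ] [IsFiniteMeasure ν] :
    ∫ w, ‖charFn d μ w - charFn d ν w‖ ^ 2 * gaussWeight d σ w =
      (√(2 * π) / σ) ^ d * gammaSq d (gaussKer d σ) μ ν := by
  set B : Measure (Fin d → ℝ) → Measure (Fin d → ℝ) → (Fin d → ℝ) → ℂ :=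
    fun μ ν w => charFn d μ w * conj (charFn d ν w) * gaussWeight d σ w
  have hexpand : ∀ w, ((‖charFn d μ w - charFn d ν w‖ ^ 2 * gaussWeight d σ w : ℝ) : ℂ) =
      B μ μ w + B ν ν w - (B ν μ w + B μ ν w) := by
    intro w
    simp only [B, Complex.ofReal_mul, Complex.ofReal_pow, ← Complex.mul_conj', map_sub]
    ring
  apply Complex.ofReal_injective
  rw [← integral_complex_ofReal]
  simp_rw [hexpand]
  have hB : ∀ μ ν [IsFiniteMeasure μ] [IsFiniteMeasure ν], Integrable (B μ ν) :=
    fun μ ν _ _ => integrable_charFn_mul_conj_mul_gaussWeight d μ ν hσ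
  rw [integral_sub, integral_add, integral_add]
  · simp only [B, integral_charFn_mul_conj_mul_gaussWeight d _ _ hσ, gammaSq,
      integral_integral_gaussKer_comm d σ μ ν]
    push_cast
    ring
  all_goals first | exact hB _ _ | exact (hB _ _).add (hB _ _)

end GaussianMMD

theorem stmt_5 (d : ℕ) (σ : ℝ) (hσ : 0 < σ)
    (P Q : Measure (Fin d → ℝ)) [IsProbabilityMeasure P] [IsProbabilityMeasure Q] :
    gammaSq d (gaussKer d σ) P Q =
      (σ / Real.sqrt (2 * Real.pi)) ^ d *
        ∫ w : Fin d → ℝ,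
          ‖charFn d P w - charFn d Q w‖ ^ 2 *
            Real.exp (-σ ^ 2 * (∑ i, w i ^ 2) / 2) := by
  have hc : (σ / √(2 * π)) ^ d * (√(2 * π) / σ) ^ d = 1 := by
    rw [← mul_pow, div_mul_div_comm, mul_comm σ, div_self (by positivity), one_pow]
  rw [← one_mul (gammaSq _ _ _ _), ← hc, mul_assoc,
    ← GaussianMMD.integral_norm_charFn_sub_sq_mul_gaussWeight d hσ P Q]
  rfl
end

section
/- Any copula-based multivariate dependency measure that vanishes only at the uniform copula is irreducible: if I(X) = M(C_X) is a functional of the copula C_X of X such that M(C_X) = 0 implies C_X = Π, then for every d ≥ 3, I(X₁,…,X_d) is not determined by the collection of values {I(X_{i₁},…,X_{i_k}) : {i₁,…,i_k} ⊊ {1,…,d}} over all proper sub-collections of coordinates. -/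
open MeasureTheory

/-- The uniform (independence) copula `Π` on `[0,1]^d`. -/
noncomputable def unifCopula (d : ℕ) : Measure (Fin d → ℝ) :=
  Measure.pi fun _ : Fin d => volume.restrict (Set.Icc (0:ℝ) 1)

/-- A `d`-dimensional copula: a probability measure all of whose one-dimensional
marginals are uniform on `[0,1]`. -/
def IsCopula (d : ℕ) (C : Measure (Fin d → ℝ)) : Prop :=
  IsProbabilityMeasure C ∧
    ∀ i : Fin d, C.map (fun u => u i) = volume.restrict (Set.Icc (0:ℝ) 1)

/-! The witness `C₂` has density `1 + ∏ i, sign (u i - 1/2)` with respect to `Π`. On a box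
`∏ i, B i` with one free side `B j = [0,1]`, the integral of the product of signs factorises and
its `j`-th factor `∫₀¹ sign (t - 1/2) dt` vanishes, so `C₂` and `Π` agree on all such boxes.
These boxes determine every proper marginal, the one-dimensional ones included, so `C₂` is a
copula with the same proper marginals as `Π`. But `C₂` vanishes on `[0,1/2] × (1/2,1]^(d-1)`,
so `C₂ ≠ Π` and hence `M C₂ ≠ 0 = M Π`. -/

open Set

instance isProbabilityMeasure_volume_restrict_Icc_zero_one :
    IsProbabilityMeasure (volume.restrict (Icc (0:ℝ) 1)) :=
  ⟨by simp [Real.volume_Icc]⟩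

instance (d : ℕ) : IsProbabilityMeasure (unifCopula d) := by
  unfold unifCopula; infer_instance

lemma setIntegral_univ_pi_prod {ι 𝕜 : Type*} [Fintype ι] [RCLike 𝕜] {E : ι → Type*}
    [∀ i, MeasurableSpace (E i)] (μ : (i : ι) → Measure (E i)) [∀ i, SigmaFinite (μ i)]
    (B : (i : ι) → Set (E i)) (f : (i : ι) → E i → 𝕜) :
    ∫ x in univ.pi B, ∏ i, f i (x i) ∂Measure.pi μ = ∏ i, ∫ t in B i, f i t ∂μ i := by
  rw [Measure.restrict_pi_pi]
  exact integral_fintype_prod_eq_prod f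

section Marginals

variable {ι α : Type*} [DecidableEq ι] [MeasurableSpace α] {μ ν : Measure (ι → α)}

lemma map_eval_eq_of_univ_pi_eq
    (h : ∀ B : ι → Set α, (∀ i, MeasurableSet (B i)) → ∀ j, B j = univ →
      μ (univ.pi B) = ν (univ.pi B))
    {i j : ι} (hji : j ≠ i) : μ.map (Function.eval i) = ν.map (Function.eval i) := by
  refine Measure.ext fun A hA => ?_
  rw [Measure.map_apply (measurable_pi_apply i) hA, Measure.map_apply (measurable_pi_apply i) hA,
    eval_preimage]
  refine h _ (fun k => ?_) j (Function.update_of_ne hji _ _)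
  rcases eq_or_ne k i with rfl | hk <;> simp [*]

lemma map_restrict_eq_of_univ_pi_eq [Fintype ι] [IsFiniteMeasure μ]
    (h : ∀ B : ι → Set α, (∀ i, MeasurableSet (B i)) → ∀ j, B j = univ →
      μ (univ.pi B) = ν (univ.pi B))
    {s : Finset ι} (hs : s ≠ Finset.univ) : μ.map s.restrict = ν.map s.restrict := by
  obtain ⟨j, hj⟩ : ∃ j, j ∉ s := by simpa [Finset.eq_univ_iff_forall] using hs
  have hbox : ∀ t : s → Set α, (∀ i, MeasurableSet (t i)) →
      μ.map s.restrict (univ.pi t) = ν.map s.restrict (univ.pi t) := by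
    intro t ht
    have hpre : s.restrict ⁻¹' univ.pi t
        = univ.pi fun i => if hi : i ∈ s then t ⟨i, hi⟩ else univ := by
      ext u
      simp only [mem_preimage, mem_univ_pi, Finset.restrict]
      refine ⟨fun hu i => ?_, fun hu i => by simpa [i.2] using hu i⟩
      split_ifs with hi
      exacts [hu ⟨i, hi⟩, mem_univ _]
    rw [Measure.map_apply (Finset.measurable_restrict s) (.univ_pi ht),
      Measure.map_apply (Finset.measurable_restrict s) (.univ_pi ht), hpre]
    refine h _ (fun i => ?_) j (by simp [hj])
    by_cases hi : i ∈ s <;> simp [hi, ht]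
  refine ext_of_generate_finite _ generateFrom_pi.symm isPiSystem_pi ?_ ?_
  · rintro _ ⟨t, ht, rfl⟩
    exact hbox t fun i => ht i trivial
  · simpa using hbox (fun _ => univ) fun _ => .univ

end Marginals

lemma isCopula_of_univ_pi_eq {d : ℕ} (hd : 2 ≤ d) {C : Measure (Fin d → ℝ)}
    [IsProbabilityMeasure C]
    (h : ∀ B : Fin d → Set ℝ, (∀ i, MeasurableSet (B i)) → ∀ j, B j = univ →
      C (univ.pi B) = unifCopula d (univ.pi B)) :
    IsCopula d C := by
  refine ⟨inferInstance, fun i => ?_⟩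
  have : Nontrivial (Fin d) := Fin.nontrivial_iff_two_le.2 hd
  obtain ⟨j, hji⟩ := exists_ne i
  exact (map_eval_eq_of_univ_pi_eq h hji).trans (measurePreserving_eval _ i).map_eq

noncomputable def halfSign (t : ℝ) : ℝ := if t ≤ 1 / 2 then -1 else 1

lemma measurable_halfSign : Measurable halfSign :=
  Measurable.ite measurableSet_Iic measurable_const measurable_const

lemma norm_halfSign (t : ℝ) : ‖halfSign t‖ = 1 := by
  unfold halfSign; split_ifs <;> simp

lemma norm_prod_halfSign {ι : Type*} [Fintype ι] (u : ι → ℝ) :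
    ‖∏ i, halfSign (u i)‖ = 1 := by
  rw [norm_prod, Finset.prod_eq_one fun i _ => norm_halfSign (u i)]

lemma integrable_halfSign (μ : Measure ℝ) [IsFiniteMeasure μ] : Integrable halfSign μ :=
  .of_bound measurable_halfSign.aestronglyMeasurable 1 (.of_forall fun t => (norm_halfSign t).le)

lemma integral_halfSign : ∫ t in Icc (0:ℝ) 1, halfSign t = 0 := by
  have hneg : ∫ t in Ioc (0:ℝ) (1 / 2), halfSign t = -(1 / 2) := by
    rw [setIntegral_congr_fun (f := halfSign) (g := fun _ => -1) measurableSet_Ioc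
      fun t ht => if_pos ht.2]
    norm_num [Real.volume_Ioc]
  have hpos : ∫ t in Ioc (1 / 2 : ℝ) 1, halfSign t = 1 / 2 := by
    rw [setIntegral_congr_fun (f := halfSign) (g := fun _ => 1) measurableSet_Ioc
      fun t ht => if_neg (not_le.2 ht.1)]
    norm_num [Real.volume_Ioc]
  rw [integral_Icc_eq_integral_Ioc,
    ← Ioc_union_Ioc_eq_Ioc (by norm_num : (0:ℝ) ≤ 1 / 2) (by norm_num),
    setIntegral_union (Ioc_disjoint_Ioc_of_le le_rfl) measurableSet_Ioc
      (integrable_halfSign _) (integrable_halfSign _), hneg, hpos]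
  norm_num

/-- Off a null set, the density `1 + ∏ i, halfSign (u i)` is `2 · 𝟙[∏ i, (u i - 1/2) ≥ 0]`.
-/
noncomputable def signCopula (d : ℕ) : Measure (Fin d → ℝ) :=
  (unifCopula d).withDensity fun u => ENNReal.ofReal (1 + ∏ i, halfSign (u i))

lemma signCopula_univ_pi {d : ℕ} {B : Fin d → Set ℝ} (hB : ∀ i, MeasurableSet (B i))
    {j : Fin d} (hj : B j = univ) :
    signCopula d (univ.pi B) = unifCopula d (univ.pi B) := by
  have hprod_meas : Measurable fun u : Fin d → ℝ => ∏ i, halfSign (u i) :=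
    Finset.measurable_prod _ fun i _ => measurable_halfSign.comp (measurable_pi_apply i)
  have hprod_int : Integrable (fun u : Fin d → ℝ => ∏ i, halfSign (u i))
      ((unifCopula d).restrict (univ.pi B)) :=
    .of_bound hprod_meas.aestronglyMeasurable 1
      (.of_forall fun u => (norm_prod_halfSign u).le)
  have hdens_int : Integrable (fun u : Fin d → ℝ => 1 + ∏ i, halfSign (u i))
      ((unifCopula d).restrict (univ.pi B)) :=
    (integrable_const 1).add hprod_int
  have hprod_zero : ∫ u in univ.pi B, ∏ i, halfSign (u i) ∂unifCopula d = 0 := by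
    rw [unifCopula, setIntegral_univ_pi_prod]
    exact Finset.prod_eq_zero (Finset.mem_univ j)
      (by rw [hj, Measure.restrict_univ, integral_halfSign])
  have hdens_nonneg : ∀ u : Fin d → ℝ, 0 ≤ 1 + ∏ i, halfSign (u i) := fun u => by
    have := neg_abs_le (∏ i, halfSign (u i))
    rw [← Real.norm_eq_abs, norm_prod_halfSign] at this
    linarith
  rw [signCopula, withDensity_apply _ (.univ_pi hB),
    ← ofReal_integral_eq_lintegral_ofReal hdens_int (.of_forall hdens_nonneg),
    integral_add (integrable_const 1) hprod_int, hprod_zero, setIntegral_const]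
  simp [measureReal_def]

lemma isProbabilityMeasure_signCopula {d : ℕ} (hd : 0 < d) :
    IsProbabilityMeasure (signCopula d) :=
  ⟨by simpa using signCopula_univ_pi (fun _ => .univ) (j := ⟨0, hd⟩) rfl⟩

lemma signCopula_ne_unifCopula {d : ℕ} (hd : 0 < d) : signCopula d ≠ unifCopula d := by
  set i₀ : Fin d := ⟨0, hd⟩
  set B : Fin d → Set ℝ := fun k => if k = i₀ then Icc 0 (1 / 2) else Ioc (1 / 2) 1
  have hB : ∀ k, MeasurableSet (B k) := fun k => by
    by_cases hk : k = i₀ <;> simp [B, hk, measurableSet_Icc, measurableSet_Ioc]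
  have hsign : signCopula d (univ.pi B) = 0 := by
    rw [signCopula, withDensity_apply _ (.univ_pi hB)]
    refine (setLIntegral_congr_fun (.univ_pi hB) fun u hu => ?_).trans lintegral_zero
    have hprod : ∏ i, halfSign (u i) = -1 := by
      rw [Finset.prod_eq_single i₀ (fun k _ hk => ?_) (by simp)]
      · have hu₀ := hu i₀ trivial
        simp only [B, if_pos rfl] at hu₀
        exact if_pos hu₀.2
      · have huk := hu k trivial
        simp only [B, if_neg hk] at huk
        exact if_neg (not_le.2 huk.1)
    simp [hprod]
  have hunif : unifCopula d (univ.pi B) ≠ 0 := by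
    rw [unifCopula, Measure.pi_pi, Finset.prod_ne_zero_iff]
    intro k _
    by_cases hk : k = i₀
    · rw [show B k = Icc 0 (1 / 2) by simp [B, hk], Measure.restrict_apply measurableSet_Icc,
        inter_eq_left.2 (Icc_subset_Icc le_rfl (by norm_num))]
      norm_num [Real.volume_Icc]
    · rw [show B k = Ioc (1 / 2) 1 by simp [B, hk], Measure.restrict_apply measurableSet_Ioc,
        inter_eq_left.2 (Ioc_subset_Icc_self.trans (Icc_subset_Icc (by norm_num) le_rfl))]
      norm_num [Real.volume_Ioc]
  exact fun h => hunif (h ▸ hsign)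

theorem stmt_8 (d : ℕ) (hd : 3 ≤ d) (M : Measure (Fin d → ℝ) → ℝ)
    (hM : ∀ C : Measure (Fin d → ℝ), IsCopula d C → (M C = 0 ↔ C = unifCopula d)) :
    ∃ C₁ C₂ : Measure (Fin d → ℝ), IsCopula d C₁ ∧ IsCopula d C₂ ∧
      M C₁ ≠ M C₂ ∧
      ∀ s : Finset (Fin d), s ≠ Finset.univ →
        C₁.map (fun u (i : s) => u i) = C₂.map (fun u (i : s) => u i) := by
  have := isProbabilityMeasure_signCopula (d := d) (by omega)
  have hbox : ∀ B : Fin d → Set ℝ, (∀ i, MeasurableSet (B i)) → ∀ j, B j = univ →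
      signCopula d (univ.pi B) = unifCopula d (univ.pi B) :=
    fun _ hB _ hj => signCopula_univ_pi hB hj
  have hunif : IsCopula d (unifCopula d) := isCopula_of_univ_pi_eq (by omega) fun _ _ _ _ => rfl
  have hC : IsCopula d (signCopula d) := isCopula_of_univ_pi_eq (by omega) hbox
  refine ⟨unifCopula d, signCopula d, hunif, hC, ?_, fun s hs =>
    map_restrict_eq_of_univ_pi_eq (fun B hB j hj => (hbox B hB j hj).symm) hs⟩
  rw [(hM _ hunif).2 rfl]
  exact fun h => signCopula_ne_unifCopula (by omega) ((hM _ hC).1 h.symm)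
end

section
/- If S, S', T, T' are random vectors in ℝ² with (S,S') i.i.d., (T,T') i.i.d., S independent of T, and all four coordinate random variables having the same one-dimensional marginal distributions coordinate-wise (each marginal of S equals the corresponding marginal of T), and T₁ ⊥ T₂, T₁' ⊥ T₂', then E[(S₁−S₁')²(S₂−S₂')²] + E[(T₁−T₁')²(T₂−T₂')²] − 2E[(S₁−T₁)²(S₂−T₂)²] = 4·Cov²(S₁,S₂). -/
open MeasureTheory

noncomputable def mom (ρ : Measure (ℝ × ℝ)) (i j : ℕ) : ℝ := ∫ p, p.1 ^ i * p.2 ^ j ∂ρ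

lemma mom_int (ρ : Measure (ℝ × ℝ)) [IsProbabilityMeasure ρ]
    (hρ : ∀ᵐ p ∂ρ, p.1 ∈ Set.Icc (0:ℝ) 1 ∧ p.2 ∈ Set.Icc (0:ℝ) 1) (i j : ℕ) :
    Integrable (fun p : ℝ × ℝ => p.1 ^ i * p.2 ^ j) ρ := by
  apply Integrable.mono' (integrable_const (1:ℝ))
  · exact ((measurable_fst.pow_const i).mul (measurable_snd.pow_const j)).aestronglyMeasurable
  · filter_upwards [hρ] with p hp
    obtain ⟨⟨h1, h2⟩, ⟨h3, h4⟩⟩ := hp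
    rw [Real.norm_eq_abs, abs_mul, abs_pow, abs_pow]
    have a1 : |p.1| ≤ 1 := abs_le.mpr ⟨by linarith, h2⟩
    have a2 : |p.2| ≤ 1 := abs_le.mpr ⟨by linarith, h4⟩
    have A : |p.1| ^ i ≤ 1 := pow_le_one₀ (abs_nonneg _) a1
    have B : |p.2| ^ j ≤ 1 := pow_le_one₀ (abs_nonneg _) a2
    nlinarith [pow_nonneg (abs_nonneg p.1) i, pow_nonneg (abs_nonneg p.2) j]

lemma poly_int (ρ : Measure (ℝ × ℝ)) [IsProbabilityMeasure ρ]
    (hρ : ∀ᵐ p ∂ρ, p.1 ∈ Set.Icc (0:ℝ) 1 ∧ p.2 ∈ Set.Icc (0:ℝ) 1)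
    (c00 c01 c02 c10 c11 c12 c20 c21 c22 : ℝ) :
    ∫ p : ℝ × ℝ, (c00 * (p.1 ^ 0 * p.2 ^ 0) + c01 * (p.1 ^ 0 * p.2 ^ 1) +
      c02 * (p.1 ^ 0 * p.2 ^ 2) + c10 * (p.1 ^ 1 * p.2 ^ 0) + c11 * (p.1 ^ 1 * p.2 ^ 1) +
      c12 * (p.1 ^ 1 * p.2 ^ 2) + c20 * (p.1 ^ 2 * p.2 ^ 0) + c21 * (p.1 ^ 2 * p.2 ^ 1) +
      c22 * (p.1 ^ 2 * p.2 ^ 2)) ∂ρ =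
    c00 * mom ρ 0 0 + c01 * mom ρ 0 1 + c02 * mom ρ 0 2 + c10 * mom ρ 1 0 +
      c11 * mom ρ 1 1 + c12 * mom ρ 1 2 + c20 * mom ρ 2 0 + c21 * mom ρ 2 1 +
      c22 * mom ρ 2 2 := by
  have I := mom_int ρ hρ
  have J0 : Integrable (fun p : ℝ × ℝ => c00 * (p.1 ^ 0 * p.2 ^ 0)) ρ := (I 0 0).const_mul c00
  have J1 : Integrable (fun p : ℝ × ℝ => c01 * (p.1 ^ 0 * p.2 ^ 1)) ρ := (I 0 1).const_mul c01
  have J2 : Integrable (fun p : ℝ × ℝ => c02 * (p.1 ^ 0 * p.2 ^ 2)) ρ := (I 0 2).const_mul c02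
  have J3 : Integrable (fun p : ℝ × ℝ => c10 * (p.1 ^ 1 * p.2 ^ 0)) ρ := (I 1 0).const_mul c10
  have J4 : Integrable (fun p : ℝ × ℝ => c11 * (p.1 ^ 1 * p.2 ^ 1)) ρ := (I 1 1).const_mul c11
  have J5 : Integrable (fun p : ℝ × ℝ => c12 * (p.1 ^ 1 * p.2 ^ 2)) ρ := (I 1 2).const_mul c12
  have J6 : Integrable (fun p : ℝ × ℝ => c20 * (p.1 ^ 2 * p.2 ^ 0)) ρ := (I 2 0).const_mul c20
  have J7 : Integrable (fun p : ℝ × ℝ => c21 * (p.1 ^ 2 * p.2 ^ 1)) ρ := (I 2 1).const_mul c21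
  have J8 : Integrable (fun p : ℝ × ℝ => c22 * (p.1 ^ 2 * p.2 ^ 2)) ρ := (I 2 2).const_mul c22
  have K1 : Integrable (fun p : ℝ × ℝ => c00 * (p.1 ^ 0 * p.2 ^ 0) + c01 * (p.1 ^ 0 * p.2 ^ 1)) ρ := J0.add J1
  have K2 : Integrable (fun p : ℝ × ℝ => c00 * (p.1 ^ 0 * p.2 ^ 0) + c01 * (p.1 ^ 0 * p.2 ^ 1) + c02 * (p.1 ^ 0 * p.2 ^ 2)) ρ := K1.add J2
  have K3 : Integrable (fun p : ℝ × ℝ => c00 * (p.1 ^ 0 * p.2 ^ 0) + c01 * (p.1 ^ 0 * p.2 ^ 1) + c02 * (p.1 ^ 0 * p.2 ^ 2) + c10 * (p.1 ^ 1 * p.2 ^ 0)) ρ := K2.add J3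
  have K4 : Integrable (fun p : ℝ × ℝ => c00 * (p.1 ^ 0 * p.2 ^ 0) + c01 * (p.1 ^ 0 * p.2 ^ 1) + c02 * (p.1 ^ 0 * p.2 ^ 2) + c10 * (p.1 ^ 1 * p.2 ^ 0) + c11 * (p.1 ^ 1 * p.2 ^ 1)) ρ := K3.add J4
  have K5 : Integrable (fun p : ℝ × ℝ => c00 * (p.1 ^ 0 * p.2 ^ 0) + c01 * (p.1 ^ 0 * p.2 ^ 1) + c02 * (p.1 ^ 0 * p.2 ^ 2) + c10 * (p.1 ^ 1 * p.2 ^ 0) + c11 * (p.1 ^ 1 * p.2 ^ 1) + c12 * (p.1 ^ 1 * p.2 ^ 2)) ρ := K4.add J5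
  have K6 : Integrable (fun p : ℝ × ℝ => c00 * (p.1 ^ 0 * p.2 ^ 0) + c01 * (p.1 ^ 0 * p.2 ^ 1) + c02 * (p.1 ^ 0 * p.2 ^ 2) + c10 * (p.1 ^ 1 * p.2 ^ 0) + c11 * (p.1 ^ 1 * p.2 ^ 1) + c12 * (p.1 ^ 1 * p.2 ^ 2) + c20 * (p.1 ^ 2 * p.2 ^ 0)) ρ := K5.add J6
  have K7 : Integrable (fun p : ℝ × ℝ => c00 * (p.1 ^ 0 * p.2 ^ 0) + c01 * (p.1 ^ 0 * p.2 ^ 1) + c02 * (p.1 ^ 0 * p.2 ^ 2) + c10 * (p.1 ^ 1 * p.2 ^ 0) + c11 * (p.1 ^ 1 * p.2 ^ 1) + c12 * (p.1 ^ 1 * p.2 ^ 2) + c20 * (p.1 ^ 2 * p.2 ^ 0) + c21 * (p.1 ^ 2 * p.2 ^ 1)) ρ := K6.add J7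
  have K8 : Integrable (fun p : ℝ × ℝ => c00 * (p.1 ^ 0 * p.2 ^ 0) + c01 * (p.1 ^ 0 * p.2 ^ 1) + c02 * (p.1 ^ 0 * p.2 ^ 2) + c10 * (p.1 ^ 1 * p.2 ^ 0) + c11 * (p.1 ^ 1 * p.2 ^ 1) + c12 * (p.1 ^ 1 * p.2 ^ 2) + c20 * (p.1 ^ 2 * p.2 ^ 0) + c21 * (p.1 ^ 2 * p.2 ^ 1) + c22 * (p.1 ^ 2 * p.2 ^ 2)) ρ := K7.add J8
  rw [integral_add K7 J8,
      integral_add K6 J7,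
      integral_add K5 J6,
      integral_add K4 J5,
      integral_add K3 J4,
      integral_add K2 J3,
      integral_add K1 J2,
      integral_add J0 J1]
  simp only [integral_const_mul, mom]

lemma mom00 (ρ : Measure (ℝ × ℝ)) [IsProbabilityMeasure ρ] : mom ρ 0 0 = 1 := by
  simp [mom]

lemma double_eq (μ ν : Measure (ℝ × ℝ)) [IsProbabilityMeasure μ] [IsProbabilityMeasure ν]
    (hμ : ∀ᵐ p ∂μ, p.1 ∈ Set.Icc (0:ℝ) 1 ∧ p.2 ∈ Set.Icc (0:ℝ) 1)
    (hν : ∀ᵐ p ∂ν, p.1 ∈ Set.Icc (0:ℝ) 1 ∧ p.2 ∈ Set.Icc (0:ℝ) 1) :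
    (∫ p, ∫ q, (p.1 - q.1) ^ 2 * (p.2 - q.2) ^ 2 ∂ν ∂μ) =
    mom ν 2 2 * mom μ 0 0 + (-(2 * mom ν 2 1)) * mom μ 0 1 + mom ν 2 0 * mom μ 0 2 +
      (-(2 * mom ν 1 2)) * mom μ 1 0 + (4 * mom ν 1 1) * mom μ 1 1 +
      (-(2 * mom ν 1 0)) * mom μ 1 2 + mom ν 0 2 * mom μ 2 0 +
      (-(2 * mom ν 0 1)) * mom μ 2 1 + mom ν 0 0 * mom μ 2 2 := by
  have h1 : ∀ x y : ℝ, (∫ q, (x - q.1) ^ 2 * (y - q.2) ^ 2 ∂ν) =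
      (x^2*y^2) * mom ν 0 0 + (-(2*x^2*y)) * mom ν 0 1 + (x^2) * mom ν 0 2 +
      (-(2*x*y^2)) * mom ν 1 0 + (4*x*y) * mom ν 1 1 + (-(2*x)) * mom ν 1 2 +
      (y^2) * mom ν 2 0 + (-(2*y)) * mom ν 2 1 + 1 * mom ν 2 2 := by
    intro x y
    rw [← poly_int ν hν (x^2*y^2) (-(2*x^2*y)) (x^2) (-(2*x*y^2)) (4*x*y) (-(2*x)) (y^2)
      (-(2*y)) 1]
    congr 1
    funext q
    ring
  simp only [h1]
  rw [show (fun p : ℝ × ℝ =>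
      (p.1^2*p.2^2) * mom ν 0 0 + (-(2*p.1^2*p.2)) * mom ν 0 1 + (p.1^2) * mom ν 0 2 +
      (-(2*p.1*p.2^2)) * mom ν 1 0 + (4*p.1*p.2) * mom ν 1 1 + (-(2*p.1)) * mom ν 1 2 +
      (p.2^2) * mom ν 2 0 + (-(2*p.2)) * mom ν 2 1 + 1 * mom ν 2 2) =
      (fun p : ℝ × ℝ => (mom ν 2 2) * (p.1 ^ 0 * p.2 ^ 0) +
        (-(2 * mom ν 2 1)) * (p.1 ^ 0 * p.2 ^ 1) + (mom ν 2 0) * (p.1 ^ 0 * p.2 ^ 2) +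
        (-(2 * mom ν 1 2)) * (p.1 ^ 1 * p.2 ^ 0) + (4 * mom ν 1 1) * (p.1 ^ 1 * p.2 ^ 1) +
        (-(2 * mom ν 1 0)) * (p.1 ^ 1 * p.2 ^ 2) + (mom ν 0 2) * (p.1 ^ 2 * p.2 ^ 0) +
        (-(2 * mom ν 0 1)) * (p.1 ^ 2 * p.2 ^ 1) + (mom ν 0 0) * (p.1 ^ 2 * p.2 ^ 2))
    from funext fun p => by ring]
  exact poly_int μ hμ _ _ _ _ _ _ _ _ _

theorem stmt_10 (C : Measure (ℝ × ℝ)) [IsProbabilityMeasure C]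
    (hsupp : ∀ᵐ p ∂C, p.1 ∈ Set.Icc (0:ℝ) 1 ∧ p.2 ∈ Set.Icc (0:ℝ) 1)
    (Q : Measure (ℝ × ℝ)) (hQ : Q = (C.map Prod.fst).prod (C.map Prod.snd)) :
    (∫ p, ∫ q, (p.1 - q.1) ^ 2 * (p.2 - q.2) ^ 2 ∂C ∂C) +
      (∫ p, ∫ q, (p.1 - q.1) ^ 2 * (p.2 - q.2) ^ 2 ∂Q ∂Q) -
      2 * (∫ p, ∫ q, (p.1 - q.1) ^ 2 * (p.2 - q.2) ^ 2 ∂Q ∂C) =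
      4 * ((∫ p, p.1 * p.2 ∂C) - (∫ p, p.1 ∂C) * (∫ p, p.2 ∂C)) ^ 2 := by
  subst hQ
  set α := C.map Prod.fst with hα
  set β := C.map Prod.snd with hβ
  haveI : IsProbabilityMeasure α := Measure.isProbabilityMeasure_map measurable_fst.aemeasurable
  haveI : IsProbabilityMeasure β := Measure.isProbabilityMeasure_map measurable_snd.aemeasurable
  have hα_ae : ∀ᵐ x ∂α, x ∈ Set.Icc (0:ℝ) 1 := by
    rw [hα]
    refine (ae_map_iff measurable_fst.aemeasurable measurableSet_Icc).mpr ?_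
    filter_upwards [hsupp] with p hp using hp.1
  have hβ_ae : ∀ᵐ y ∂β, y ∈ Set.Icc (0:ℝ) 1 := by
    rw [hβ]
    refine (ae_map_iff measurable_snd.aemeasurable measurableSet_Icc).mpr ?_
    filter_upwards [hsupp] with p hp using hp.2
  have hQsupp : ∀ᵐ p ∂(α.prod β), p.1 ∈ Set.Icc (0:ℝ) 1 ∧ p.2 ∈ Set.Icc (0:ℝ) 1 := by
    have hms : MeasurableSet {p : ℝ × ℝ | p.1 ∈ Set.Icc (0:ℝ) 1 ∧ p.2 ∈ Set.Icc (0:ℝ) 1} :=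
      (measurableSet_Icc.preimage measurable_fst).inter (measurableSet_Icc.preimage measurable_snd)
    rw [Measure.ae_prod_iff_ae_ae hms]
    filter_upwards [hα_ae] with x hx
    filter_upwards [hβ_ae] with y hy
    exact ⟨hx, hy⟩
  have momQ : ∀ i j : ℕ, mom (α.prod β) i j = mom C i 0 * mom C 0 j := by
    intro i j
    have h1 : mom (α.prod β) i j =
        (∫ x, x ^ i ∂α) * (∫ y, y ^ j ∂β) := by
      rw [mom, ← integral_prod_mul (fun x => x ^ i) (fun y => y ^ j)]
    have e1 : (∫ x, x ^ i ∂α) = ∫ p : ℝ × ℝ, p.1 ^ i ∂C := by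
      rw [hα]
      exact integral_map measurable_fst.aemeasurable
        (show AEStronglyMeasurable (fun x : ℝ => x ^ i) _ from
          (measurable_id.pow_const i).aestronglyMeasurable)
    have e2 : (∫ y, y ^ j ∂β) = ∫ p : ℝ × ℝ, p.2 ^ j ∂C := by
      rw [hβ]
      exact integral_map measurable_snd.aemeasurable
        (show AEStronglyMeasurable (fun y : ℝ => y ^ j) _ from
          (measurable_id.pow_const j).aestronglyMeasurable)
    rw [h1, e1, e2]
    simp [mom]
  rw [double_eq C C hsupp hsupp, double_eq (α.prod β) (α.prod β) hQsupp hQsupp,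
    double_eq C (α.prod β) hsupp hQsupp,
    show (∫ p, p.1 * p.2 ∂C) = mom C 1 1 from by simp [mom],
    show (∫ p, p.1 ∂C) = mom C 1 0 from by simp [mom],
    show (∫ p, p.2 ∂C) = mom C 0 1 from by simp [mom]]
  simp only [momQ, mom00]
  ring
end

section
/- For σ > 0 and n ≥ 2, the function i ↦ Σ_{l=1}^{n} exp(−(i−l)²/(2n²σ²)) on {1,…,n} satisfies: Σ_l exp(−(i−l)²/(2n²σ²)) = Σ_l exp(−(i'−l)²/(2n²σ²)) if and only if i' = i or i' = n+1−i. In particular this sum is strictly increasing in i on the range where i < n+1−i. -/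
/-!
Write `S i = ∑_{l=1}^{n} g (i - l)` with `g x = exp (-x² / c)`, an even function that is strictly
decreasing in `|x|`. Shifting `i` by one moves the window of `n` terms by one, so the sum telescopes:
`S (i + 1) - S i = g i - g (i - n)`, which is positive while `i < n - i`. Together with the symmetry
`S (n + 1 - i) = S i` (substitute `l ↦ n + 1 - l` and use evenness), `S` is strictly increasing on
the lower half of `{1, …, n}` and takes each of its values exactly at a pair `{i, n + 1 - i}`.
-/

open Finset Real

def windowSum (g : ℝ → ℝ) (n : ℕ) (x : ℝ) : ℝ := ∑ l ∈ Icc 1 n, g (x - l)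

namespace windowSum

variable {g : ℝ → ℝ} {n : ℕ}

theorem add_one_sub (g : ℝ → ℝ) (n : ℕ) (x : ℝ) :
    windowSum g n (x + 1) - windowSum g n x = g x - g (x - n) := by
  induction n with
  | zero => simp [windowSum]
  | succ n ih =>
    simp only [windowSum] at ih ⊢
    rw [sum_Icc_succ_top (by omega), sum_Icc_succ_top (by omega)]
    push_cast
    rw [show x + 1 - (n + 1) = x - n by ring]
    linarith

theorem reflect (hg : Function.Even g) (x : ℝ) :
    windowSum g n (n + 1 - x) = windowSum g n x := by
  refine sum_nbij' (fun l ↦ n + 1 - l) (fun l ↦ n + 1 - l) ?_ ?_ ?_ ?_ ?_ <;>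
    intro l hl <;> simp only [mem_Icc] at hl ⊢
  · omega
  · omega
  · omega
  · omega
  · rw [Nat.cast_sub (by omega), ← hg]
    push_cast
    ring_nf

theorem lt_add_one_of_two_mul_lt (hg : Function.Even g) (hanti : StrictAntiOn g (Set.Ici 0)) {x : ℝ}
    (hx₀ : 0 ≤ x) (hx : 2 * x < n) : windowSum g n x < windowSum g n (x + 1) := by
  have hfar : g (x - n) < g x := by
    rw [← hg, neg_sub]
    exact hanti (Set.mem_Ici.2 hx₀) (Set.mem_Ici.2 (by linarith)) (by linarith)
  linarith [add_one_sub g n x]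

theorem strictMonoOn_lowerHalf (hg : Function.Even g) (hanti : StrictAntiOn g (Set.Ici 0)) :
    StrictMonoOn (fun i : ℕ ↦ windowSum g n i) (Set.Iic ((n + 1) / 2)) := by
  refine strictMonoOn_Iic_of_lt_succ fun m hm ↦ ?_
  rw [Order.succ_eq_add_one, Nat.cast_add_one]
  exact lt_add_one_of_two_mul_lt hg hanti m.cast_nonneg (by exact_mod_cast (by omega : 2 * m < n))

theorem eq_fold (hg : Function.Even g) {i : ℕ} (hi : i ≤ n) :
    windowSum g n i = windowSum g n (min i (n + 1 - i) : ℕ) := by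
  rcases min_cases i (n + 1 - i) with ⟨h, -⟩ | ⟨h, -⟩
  · rw [h]
  · rw [h, Nat.cast_sub (by omega), Nat.cast_add_one, reflect hg]

theorem eq_iff (hg : Function.Even g) (hanti : StrictAntiOn g (Set.Ici 0)) {i i' : ℕ}
    (hi : i ≤ n) (hi' : i' ≤ n) :
    windowSum g n i = windowSum g n i' ↔ i' = i ∨ i' = n + 1 - i := by
  rw [eq_fold hg hi, eq_fold hg hi',
    (strictMonoOn_lowerHalf hg hanti).injOn.eq_iff (Set.mem_Iic.2 (by omega))
      (Set.mem_Iic.2 (by omega))]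
  omega

end windowSum

theorem even_exp_neg_sq_div (c : ℝ) : Function.Even fun x : ℝ ↦ exp (-x ^ 2 / c) :=
  fun x ↦ by simp

theorem strictAntiOn_exp_neg_sq_div {c : ℝ} (hc : 0 < c) :
    StrictAntiOn (fun x : ℝ ↦ exp (-x ^ 2 / c)) (Set.Ici 0) := by
  intro x hx y hy hxy
  have hsq : x ^ 2 < y ^ 2 := pow_lt_pow_left₀ hxy hx two_ne_zero
  simp only [exp_lt_exp]
  exact div_lt_div_of_pos_right (by linarith) hc

theorem stmt_12_general (n : ℕ) (σ : ℝ) (hσ : 0 < σ) :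
    (∀ i i' : ℕ, 1 ≤ i → i ≤ n → 1 ≤ i' → i' ≤ n →
      ((∑ l ∈ Finset.Icc 1 n, Real.exp (-((i : ℝ) - l) ^ 2 / (2 * n ^ 2 * σ ^ 2)) =
          ∑ l ∈ Finset.Icc 1 n, Real.exp (-((i' : ℝ) - l) ^ 2 / (2 * n ^ 2 * σ ^ 2))) ↔
        (i' = i ∨ i' = n + 1 - i))) ∧
    (∀ i i' : ℕ, 1 ≤ i → i < i' → i' ≤ n → i' < n + 1 - i' →
      (∑ l ∈ Finset.Icc 1 n, Real.exp (-((i : ℝ) - l) ^ 2 / (2 * n ^ 2 * σ ^ 2))) <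
        ∑ l ∈ Finset.Icc 1 n, Real.exp (-((i' : ℝ) - l) ^ 2 / (2 * n ^ 2 * σ ^ 2))) := by
  rcases n.eq_zero_or_pos with rfl | hn
  · exact ⟨fun _ _ _ _ _ _ ↦ by omega, fun _ _ _ _ _ _ ↦ by omega⟩
  have hc : (0 : ℝ) < 2 * n ^ 2 * σ ^ 2 := by positivity
  have hg := even_exp_neg_sq_div (2 * n ^ 2 * σ ^ 2)
  have hanti := strictAntiOn_exp_neg_sq_div hc
  refine ⟨fun i i' _ hi _ hi' ↦ windowSum.eq_iff hg hanti hi hi', fun i i' _ hii' _ hi' ↦ ?_⟩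
  exact windowSum.strictMonoOn_lowerHalf hg hanti (Set.mem_Iic.2 (by omega))
    (Set.mem_Iic.2 (by omega)) hii'

theorem stmt_12 (n : ℕ) (hn : 2 ≤ n) (σ : ℝ) (hσ : 0 < σ) :
    (∀ i i' : ℕ, 1 ≤ i → i ≤ n → 1 ≤ i' → i' ≤ n →
      ((∑ l ∈ Finset.Icc 1 n, Real.exp (-((i : ℝ) - l) ^ 2 / (2 * n ^ 2 * σ ^ 2)) =
          ∑ l ∈ Finset.Icc 1 n, Real.exp (-((i' : ℝ) - l) ^ 2 / (2 * n ^ 2 * σ ^ 2))) ↔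
        (i' = i ∨ i' = n + 1 - i))) ∧
    (∀ i i' : ℕ, 1 ≤ i → i < i' → i' ≤ n → i' < n + 1 - i' →
      (∑ l ∈ Finset.Icc 1 n, Real.exp (-((i : ℝ) - l) ^ 2 / (2 * n ^ 2 * σ ^ 2))) <
        ∑ l ∈ Finset.Icc 1 n, Real.exp (-((i' : ℝ) - l) ^ 2 / (2 * n ^ 2 * σ ^ 2))) :=
  stmt_12_general n σ hσ
end

section
/- Let n ≥ 2, σ > 0, and let V₁(i,j), V₂(i,j) (1 ≤ i,j ≤ n) be the doubly-centered Gaussian kernel matrices built from two permutations y₁, y₂ of {1/n, 2/n, …, 1} respectively: V_c(i,j) = k_σ(y_c(i), y_c(j)) − (1/n)Σ_a k_σ(y_c(a), y_c(j)) − (1/n)Σ_b k_σ(y_c(i), y_c(b)) + (1/n²)Σ_{a,b} k_σ(y_c(a), y_c(b)). Then Σ_{i,j} V₁(i,j)V₂(i,j) ≤ [Σ_{i,j} V₁(i,j)² · Σ_{i,j} V₂(i,j)²]^{1/2}, with Σ_{i,j}V₁² = Σ_{i,j}V₂², and equality holds if and only if either y₂(i) = y₁(i) for all i, or y₂(i)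 = (n+1)/n − y₁(i) for all i. -/
/-!
Both centred matrices are double centrings of Gaussian Gram matrices of the same grid
`{1/n, …, 1}`, listed in two orders, so `V₂` is `V₁` with rows and columns permuted by the same
permutation; this gives equal norms, and Cauchy–Schwarz gives the inequality. Equality forces
`V₁ = V₂`. Double centring is injective on symmetric matrices with a prescribed diagonal, and the
Gaussian kernel is injective in `|u - v|`, so `y₁` and `y₂` induce the same distances. A
distance-preserving relabelling of a set spanning `[a, b]` that stays inside `[a, b]` sends the
endpoints to the endpoints, hence is the identity or the reflection `u ↦ a + b - u`.
-/

open Finset Real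

noncomputable def gaussKernel (σ u v : ℝ) : ℝ := Real.exp (-(u - v) ^ 2 / (2 * σ ^ 2))

lemma gaussKernel_comm (σ u v : ℝ) : gaussKernel σ u v = gaussKernel σ v u := by
  unfold gaussKernel; ring_nf

@[simp]
lemma gaussKernel_self (σ u : ℝ) : gaussKernel σ u u = 1 := by
  simp [gaussKernel]

lemma gaussKernel_eq_iff {σ : ℝ} (hσ : σ ≠ 0) (u v u' v' : ℝ) :
    gaussKernel σ u v = gaussKernel σ u' v' ↔ |u - v| = |u' - v'| := by
  have h2σ : 2 * σ ^ 2 ≠ 0 := by positivity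
  rw [gaussKernel, gaussKernel, Real.exp_eq_exp, div_left_inj' h2σ, neg_inj,
    sq_eq_sq_iff_abs_eq_abs]

section DoubleCenter

variable {ι : Type*} [Fintype ι]

noncomputable def doubleCenter (K : ι → ι → ℝ) (i j : ι) : ℝ :=
  K i j - (1 / Fintype.card ι) * ∑ a, K a j - (1 / Fintype.card ι) * ∑ b, K i b +
    (1 / (Fintype.card ι : ℝ) ^ 2) * ∑ a, ∑ b, K a b

lemma doubleCenter_sub (K L : ι → ι → ℝ) :
    doubleCenter (K - L) = doubleCenter K - doubleCenter L := by
  funext i j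
  simp only [doubleCenter, Pi.sub_apply, sum_sub_distrib]
  ring

lemma doubleCenter_comp_equiv (K : ι → ι → ℝ) (τ : ι ≃ ι) (i j : ι) :
    doubleCenter (fun a b => K (τ a) (τ b)) i j = doubleCenter K (τ i) (τ j) := by
  simp only [doubleCenter, Equiv.sum_comp τ (fun a => K a (τ j)),
    Equiv.sum_comp τ (fun b => K (τ i) b), Equiv.sum_comp τ (K _),
    Equiv.sum_comp τ (fun a => ∑ b, K a b)]

lemma eq_zero_of_doubleCenter_eq_zero {D : ι → ι → ℝ} (hsymm : ∀ i j, D i j = D j i)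
    (hdiag : ∀ i, D i i = 0) (h : doubleCenter D = 0) : D = 0 := by
  set r : ι → ℝ := fun i => (1 / Fintype.card ι) * ∑ b, D i b
  set t : ℝ := (1 / (Fintype.card ι : ℝ) ^ 2) * ∑ a, ∑ b, D a b
  have hcol : ∀ j, ∑ a, D a j = ∑ b, D j b := fun j => sum_congr rfl fun a _ => hsymm a j
  -- by symmetry `D i j = r i + r j - t`, and the diagonal then forces `r i = t / 2`
  have hD : ∀ i j, D i j = r i + r j - t := by
    intro i j
    have hij := congrFun (congrFun h i) j
    simp only [doubleCenter, Pi.zero_apply, hcol] at hij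
    simp only [r, t]
    linarith
  funext i j
  have hi := hD i i
  have hj := hD j j
  rw [hdiag] at hi hj
  rw [hD i j, Pi.zero_apply, Pi.zero_apply]
  linarith

lemma doubleCenter_inj_of_symm {K L : ι → ι → ℝ} (hK : ∀ i j, K i j = K j i)
    (hL : ∀ i j, L i j = L j i) (hdiag : ∀ i, K i i = L i i) :
    doubleCenter K = doubleCenter L ↔ K = L := by
  refine ⟨fun h => sub_eq_zero.1 ?_, fun h => h ▸ rfl⟩
  refine eq_zero_of_doubleCenter_eq_zero (fun i j => ?_) (fun i => sub_eq_zero.2 (hdiag i)) ?_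
  · simp only [Pi.sub_apply, hK i j, hL i j]
  · rw [doubleCenter_sub, h, sub_self]

lemma doubleCenter_gaussKernel_eq_iff {σ : ℝ} (hσ : σ ≠ 0) (x y : ι → ℝ) :
    doubleCenter (fun i j => gaussKernel σ (x i) (x j)) =
        doubleCenter (fun i j => gaussKernel σ (y i) (y j)) ↔
      ∀ i j, |x i - x j| = |y i - y j| := by
  rw [doubleCenter_inj_of_symm (fun _ _ => gaussKernel_comm ..) (fun _ _ => gaussKernel_comm ..)
    (by simp)]
  simp only [funext_iff, gaussKernel_eq_iff hσ]

end DoubleCenter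

section DoubleSums

variable {ι κ : Type*} [Fintype ι] [Fintype κ]

lemma sum_sum_mul_le_sqrt (A B : ι → κ → ℝ) :
    ∑ i, ∑ j, A i j * B i j ≤ √((∑ i, ∑ j, A i j ^ 2) * ∑ i, ∑ j, B i j ^ 2) := by
  rw [sqrt_mul (sum_nonneg fun _ _ => sum_nonneg fun _ _ => sq_nonneg _)]
  simpa only [Fintype.sum_prod_type] using
    Real.sum_mul_le_sqrt_mul_sqrt univ (fun p : ι × κ => A p.1 p.2) (fun p => B p.1 p.2)

lemma sum_sum_mul_eq_sqrt_iff {A B : ι → κ → ℝ}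
    (hAB : ∑ i, ∑ j, A i j ^ 2 = ∑ i, ∑ j, B i j ^ 2) :
    ∑ i, ∑ j, A i j * B i j = √((∑ i, ∑ j, A i j ^ 2) * ∑ i, ∑ j, B i j ^ 2) ↔ A = B := by
  have hA : 0 ≤ ∑ i, ∑ j, A i j ^ 2 := sum_nonneg fun _ _ => sum_nonneg fun _ _ => sq_nonneg _
  rw [← hAB, sqrt_mul_self hA]
  constructor
  · intro h
    have hdiff : ∑ p : ι × κ, (A p.1 p.2 - B p.1 p.2) ^ 2 = 0 := by
      simp only [Fintype.sum_prod_type, sub_sq, sum_add_distrib, sum_sub_distrib, ← mul_sum,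
        mul_assoc]
      linarith
    funext i j
    have := (Fintype.sum_eq_zero_iff_of_nonneg fun _ => sq_nonneg _).1 hdiff
    exact sub_eq_zero.1 (pow_eq_zero_iff two_ne_zero |>.1 (congrFun this (i, j)))
  · rintro rfl
    simp only [sq]

lemma sum_sum_sq_comp_equiv (A : ι → ι → ℝ) (τ : ι ≃ ι) :
    ∑ i, ∑ j, A (τ i) (τ j) ^ 2 = ∑ i, ∑ j, A i j ^ 2 := by
  rw [← Equiv.sum_comp τ (fun i => ∑ j, A i j ^ 2)]
  exact sum_congr rfl fun i _ => Equiv.sum_comp τ (fun j => A (τ i) j ^ 2)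

end DoubleSums

lemma abs_sub_eq_iff_eq_or_eq_reflect {ι : Type*} {a b : ℝ} {x y : ι → ℝ}
    (hx : ∀ i, x i ∈ Set.Icc a b) (hy : ∀ i, y i ∈ Set.Icc a b) {i₀ i₁ : ι}
    (ha : x i₀ = a) (hb : x i₁ = b) :
    (∀ i j, |x i - x j| = |y i - y j|) ↔ (∀ i, y i = x i) ∨ ∀ i, y i = a + b - x i := by
  constructor
  · intro h
    have hab : a ≤ b := ha ▸ (hx i₀).2
    -- `y i₀` and `y i₁` lie in `[a, b]` at distance `b - a`, so they are its endpoints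
    have hend : y i₀ = a ∨ y i₀ = b := by
      have h₀₁ := h i₁ i₀
      rw [ha, hb, abs_of_nonneg (sub_nonneg.2 hab)] at h₀₁
      rcases abs_eq (sub_nonneg.2 hab) |>.1 h₀₁.symm with h' | h'
      · left; linarith [(hy i₀).1, (hy i₁).2]
      · right; linarith [(hy i₀).2, (hy i₁).1]
    rcases hend with hend | hend
    · left
      intro i
      have hi := h i i₀
      rw [ha, hend, abs_of_nonneg (by linarith [(hx i).1]),
        abs_of_nonneg (by linarith [(hy i).1])] at hi
      linarith
    · right
      intro i
      have hi := h i i₀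
      rw [ha, hend, abs_of_nonneg (by linarith [(hx i).1]),
        abs_of_nonpos (by linarith [(hy i).2])] at hi
      linarith
  · rintro (h | h) i j <;> rw [h, h]
    rw [abs_sub_comm]
    ring_nf

lemma succ_div_mem_Icc {n : ℕ} (k : Fin n) : ((k : ℕ) + 1 : ℝ) / n ∈ Set.Icc (1 / (n : ℝ)) 1 := by
  refine ⟨div_le_div_of_nonneg_right (by simp) n.cast_nonneg, div_le_one_of_le₀ ?_ n.cast_nonneg⟩
  exact_mod_cast k.isLt

theorem stmt_15 (n : ℕ) (hn : 2 ≤ n) (σ : ℝ) (hσ : 0 < σ)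
    (π₁ π₂ : Equiv.Perm (Fin n)) (y₁ y₂ : Fin n → ℝ)
    (hy₁ : ∀ i, y₁ i = ((π₁ i : ℕ) + 1 : ℝ) / n)
    (hy₂ : ∀ i, y₂ i = ((π₂ i : ℕ) + 1 : ℝ) / n)
    (V₁ V₂ : Fin n → Fin n → ℝ)
    (hV₁ : ∀ i j, V₁ i j =
      Real.exp (-(y₁ i - y₁ j) ^ 2 / (2 * σ ^ 2)) -
        (1 / n) * ∑ a, Real.exp (-(y₁ a - y₁ j) ^ 2 / (2 * σ ^ 2)) -
        (1 / n) * ∑ b, Real.exp (-(y₁ i - y₁ b) ^ 2 / (2 * σ ^ 2)) +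
        (1 / (n : ℝ) ^ 2) * ∑ a, ∑ b, Real.exp (-(y₁ a - y₁ b) ^ 2 / (2 * σ ^ 2)))
    (hV₂ : ∀ i j, V₂ i j =
      Real.exp (-(y₂ i - y₂ j) ^ 2 / (2 * σ ^ 2)) -
        (1 / n) * ∑ a, Real.exp (-(y₂ a - y₂ j) ^ 2 / (2 * σ ^ 2)) -
        (1 / n) * ∑ b, Real.exp (-(y₂ i - y₂ b) ^ 2 / (2 * σ ^ 2)) +
        (1 / (n : ℝ) ^ 2) * ∑ a, ∑ b, Real.exp (-(y₂ a - y₂ b) ^ 2 / (2 * σ ^ 2))) :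
    (∑ i, ∑ j, V₁ i j * V₂ i j ≤
        Real.sqrt ((∑ i, ∑ j, (V₁ i j) ^ 2) * ∑ i, ∑ j, (V₂ i j) ^ 2)) ∧
    (∑ i, ∑ j, (V₁ i j) ^ 2 = ∑ i, ∑ j, (V₂ i j) ^ 2) ∧
    ((∑ i, ∑ j, V₁ i j * V₂ i j =
        Real.sqrt ((∑ i, ∑ j, (V₁ i j) ^ 2) * ∑ i, ∑ j, (V₂ i j) ^ 2)) ↔
      ((∀ i, y₂ i = y₁ i) ∨ ∀ i, y₂ i = ((n : ℝ) + 1) / n - y₁ i)) := by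
  have hV₁' : V₁ = doubleCenter (fun i j => gaussKernel σ (y₁ i) (y₁ j)) := by
    funext i j; simp [hV₁, doubleCenter, gaussKernel]
  have hV₂' : V₂ = doubleCenter (fun i j => gaussKernel σ (y₂ i) (y₂ j)) := by
    funext i j; simp [hV₂, doubleCenter, gaussKernel]
  set τ := π₂.trans π₁.symm
  have hV₂τ : V₂ = fun i j => V₁ (τ i) (τ j) := by
    have hy₂τ : ∀ i, y₂ i = y₁ (τ i) := by simp [τ, hy₁, hy₂]
    funext i j
    simp only [hV₂', hy₂τ, hV₁']
    exact doubleCenter_comp_equiv (fun u v => gaussKernel σ (y₁ u) (y₁ v)) τ i j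
  have hnorm : ∑ i, ∑ j, V₁ i j ^ 2 = ∑ i, ∑ j, V₂ i j ^ 2 := by
    rw [hV₂τ, sum_sum_sq_comp_equiv]
  refine ⟨sum_sum_mul_le_sqrt V₁ V₂, hnorm, ?_⟩
  have hn0 : 0 < n := by omega
  have hlo : y₁ (π₁.symm ⟨0, hn0⟩) = 1 / n := by simp [hy₁]
  have hhi : y₁ (π₁.symm ⟨n - 1, by omega⟩) = 1 := by
    simp [hy₁, Nat.cast_pred hn0, hn0.ne']
  rw [sum_sum_mul_eq_sqrt_iff hnorm, hV₁', hV₂', doubleCenter_gaussKernel_eq_iff hσ.ne',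
    abs_sub_eq_iff_eq_or_eq_reflect (fun i => hy₁ i ▸ succ_div_mem_Icc _)
      (fun i => hy₂ i ▸ succ_div_mem_Icc _) hlo hhi,
    show ((n : ℝ) + 1) / n = 1 / n + 1 by rw [add_div, div_self (by positivity), add_comm]]
end
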